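/- With G, F, ζ as above, suppose the order t of k modulo m is a proper divisor of n, write n = t·r, and suppose r is invertible in F and F contains a primitive r-th root of unity η. Then the n-dimensional induced representation V decomposes as a direct sum of r pairwise non-isomorphic irreducible t-dimensional subrepresentations W₀,…,W_{r-1}, where on W_i the generator a acts by diag(ζ, ζ^k, …, ζ^{k^{t-1}}) and b acts by the t×t cyclic shift matrix with top-right corner entry η^{-i}. -/

import Mathlib

/-!
Write `v_{ij}` coordinatewise: its `p`-th entry is `η^{i⌊p/t⌋}` if `p ≡ j (mod t)` and `0`
otherwise. Then `a v_{ij} = ζ^{k^j} v_{ij}`, `b` sends `v_{ij}` to `v_{i,j+1}` (to `η^{-i} v_{i0}`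
when `j = t - 1`), and `b^t = η^{-i}` on `W_i`. The eigenvalues `ζ^{k^j}` (`j < t`) are pairwise
distinct because `k` has order `t` modulo `m`, and so are the `η^{-i}` (`i < r`). Hence the `W_i`
lie in distinct eigenspaces of `b^t`, which makes them independent and pairwise non-isomorphic,
and a dimension count gives `V = ⊕ W_i`. A nonzero `a`- and `b`-stable subspace of `W_i` contains
some `v_{ij}`, by Lagrange interpolation in `a`, hence all of them since `b` permutes the lines
`F v_{ij}` cyclically.
-/

open Function Module Module.End Submodule Polynomial Set

theorem Nat.add_one_mod_div_cases {t : ℕ} (ht : 0 < t) (q : ℕ) :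
    (q % t + 1 < t ∧ (q + 1) % t = q % t + 1 ∧ (q + 1) / t = q / t) ∨
      (q % t + 1 = t ∧ (q + 1) % t = 0 ∧ (q + 1) / t = q / t + 1) := by
  have hq := Nat.mod_add_div q t
  rcases Nat.lt_or_ge (q % t + 1) t with h | h
  · obtain ⟨hdiv, hmod⟩ :=
      (Nat.div_mod_unique (a := q + 1) (d := q / t) (c := q % t + 1) ht).2 ⟨by omega, h⟩
    exact .inl ⟨h, hmod, hdiv⟩
  · have hlast : q % t + 1 = t := le_antisymm (Nat.mod_lt q ht) h
    obtain ⟨hdiv, hmod⟩ :=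
      (Nat.div_mod_unique (a := q + 1) (d := q / t + 1) (c := 0) ht).2 ⟨by rw [mul_add]; omega, ht⟩
    exact .inr ⟨hlast, hmod, hdiv⟩

theorem Fin.val_add_one_eq_mod {t : ℕ} [NeZero t] (j : Fin t) :
    ((j + 1 : Fin t) : ℕ) = ((j : ℕ) + 1) % t := by
  rw [Fin.val_add, Fin.val_one', Nat.add_mod_mod]

open Fin.NatCast in
theorem Fin.forall_of_forall_imp_add_one {t : ℕ} [NeZero t] {P : Fin t → Prop}
    (hP : ∀ j, P j → P (j + 1)) {j₀ : Fin t} (h₀ : P j₀) (j : Fin t) : P j := by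
  have hadd (d : ℕ) : P (j₀ + (d : Fin t)) := by
    induction d with
    | zero => simpa using h₀
    | succ d ih => simpa [add_assoc] using hP _ ih
  simpa using hadd (j - j₀).val

open Fin.NatCast in
theorem Function.Periodic.apply_val_sub_add {α : Type*} {f : ℕ → α} {n : ℕ} [NeZero n]
    (hf : Periodic f n) (p : Fin n) (d : ℕ) : f (((p - d : Fin n) : ℕ) + d) = f p := by
  conv_rhs => rw [← sub_add_cancel p (d : Fin n), Fin.val_add, Fin.val_natCast, Nat.add_mod_mod,
    hf.map_mod_nat]

theorem IsPrimitiveRoot.pow_pow_eq_pow_pow_iff {M : Type*} [CommMonoid M] {ζ : M} {m k t : ℕ}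
    (hζ : IsPrimitiveRoot ζ m) (hm : 0 < m) (hk : orderOf (k : ZMod m) = t) (ht : 0 < t)
    (a b : ℕ) : ζ ^ k ^ a = ζ ^ k ^ b ↔ a % t = b % t := by
  have hζfin : IsOfFinOrder ζ := isOfFinOrder_iff_pow_eq_one.2 ⟨m, hm, hζ.pow_eq_one⟩
  have hkfin : IsOfFinOrder (k : ZMod m) := orderOf_pos_iff.1 (hk ▸ ht)
  rw [hζfin.pow_eq_pow_iff_modEq, ← hζ.eq_orderOf, ← ZMod.natCast_eq_natCast_iff, Nat.cast_pow,
    Nat.cast_pow, hkfin.pow_inj_mod, hk]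

section CyclicEigenfamily

variable {K V : Type*} [Field K] [AddCommGroup V] [Module K V]

theorem Module.End.smul_mem_of_sum_smul_mem {ι : Type*} [Fintype ι] [DecidableEq ι]
    {f : End K V} {U : Submodule K V} (hU : U ≤ U.comap f) {μ : ι → K} (hμ : Function.Injective μ)
    {v : ι → V} (hv : ∀ i, f (v i) = μ i • v i) {c : ι → K} (hc : ∑ i, c i • v i ∈ U) (i : ι) :
    c i • v i ∈ U := by
  -- Lagrange interpolation: `p(f)` kills every `v j` with `j ≠ i` and rescales `v i`.
  set p : K[X] := ∏ j ∈ Finset.univ.erase i, (X - C (μ j))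
  have hp : p.eval (μ i) ≠ 0 := by
    rw [eval_prod]
    exact Finset.prod_ne_zero_iff.2 fun j hj => by
      simpa [sub_eq_zero] using hμ.ne (Finset.ne_of_mem_erase hj).symm
  have hpc : aeval f p (∑ j, c j • v j) = p.eval (μ i) • c i • v i := by
    rw [map_sum, Finset.sum_eq_single i]
    · rw [map_smul, aeval_apply_of_mem_apply_eq_smul (hv i), smul_comm]
    · intro j _ hji
      rw [map_smul, aeval_apply_of_mem_apply_eq_smul (hv j), eval_prod,
        Finset.prod_eq_zero (Finset.mem_erase.2 ⟨hji, Finset.mem_univ j⟩) (by simp), zero_smul,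
        smul_zero]
    · simp
  have hmem := aeval_apply_smul_mem_of_le_comap hc p f hU
  rw [hpc] at hmem
  simpa [smul_smul, inv_mul_cancel_left₀ hp] using U.smul_mem (p.eval (μ i))⁻¹ hmem

theorem span_range_le_comap {κ : Type*} {f : End K V} {v : κ → V}
    (h : ∀ j, ∃ (a : K) (j' : κ), f (v j) = a • v j') :
    span K (range v) ≤ (span K (range v)).comap f := by
  refine span_le.2 (range_subset_iff.2 fun j => ?_)
  obtain ⟨a, j', hj⟩ := h j
  simpa [hj] using smul_mem _ a (subset_span (mem_range_self j'))

theorem eq_bot_or_eq_span_of_le_comap {t : ℕ} [NeZero t] {A B : End K V} {v : Fin t → V}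
    {μ : Fin t → K} (hμ : Injective μ) (hA : ∀ j, A (v j) = μ j • v j)
    (hB : ∀ j, ∃ a : K, a ≠ 0 ∧ B (v j) = a • v (j + 1)) {U : Submodule K V}
    (hU : U ≤ span K (range v)) (hUA : U ≤ U.comap A) (hUB : U ≤ U.comap B) :
    U = ⊥ ∨ U = span K (range v) := by
  classical
  refine (eq_or_ne U ⊥).imp_right fun hne => le_antisymm hU ?_
  obtain ⟨x, hxU, hx0⟩ := (Submodule.ne_bot_iff U).1 hne
  obtain ⟨c, rfl⟩ := (mem_span_range_iff_exists_fun K).1 (hU hxU)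
  obtain ⟨j₀, hj₀⟩ : ∃ j, c j ≠ 0 := by
    by_contra! h
    simp [h] at hx0
  have hv₀ : v j₀ ∈ U := (U.smul_mem_iff hj₀).1 (smul_mem_of_sum_smul_mem hUA hμ hA hxU j₀)
  have hstep (j : Fin t) (hj : v j ∈ U) : v (j + 1) ∈ U := by
    obtain ⟨a, ha, hBj⟩ := hB j
    exact (U.smul_mem_iff ha).1 (by simpa [hBj] using hUB hj)
  exact span_le.2 (range_subset_iff.2 (Fin.forall_of_forall_imp_add_one hstep hv₀))

theorem map_pow_apply_of_map_apply {B f : End K V} {W : Submodule K V} (hW : W ≤ W.comap B)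
    (hcomm : ∀ x ∈ W, f (B x) = B (f x)) (d : ℕ) {x : V} (hx : x ∈ W) :
    f ((B ^ d) x) = (B ^ d) (f x) := by
  induction d generalizing x with
  | zero => simp
  | succ d ih => rw [pow_succ, mul_apply, ih (hW hx), hcomm x hx, mul_apply]

theorem not_exists_intertwining_of_le_eigenspace (A : End K V) {B : End K V} {t : ℕ}
    {W W' : Submodule K V} (hWB : W ≤ W.comap B) (hW : W ≠ ⊥) {μ μ' : K} (hμ : μ ≠ μ')
    (hWμ : W ≤ (B ^ t).eigenspace μ) (hWμ' : W' ≤ (B ^ t).eigenspace μ') :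
    ¬ ∃ f : V →ₗ[K] V, W.map f = W' ∧ (∀ x ∈ W, f x = 0 → x = 0) ∧
      (∀ x ∈ W, f (A x) = A (f x) ∧ f (B x) = B (f x)) := by
  rintro ⟨f, hmap, hinj, hcomm⟩
  obtain ⟨x, hxW, hx0⟩ := (Submodule.ne_bot_iff W).1 hW
  have hfx0 : f x ≠ 0 := fun h => hx0 (hinj x hxW h)
  have hfx : f x ∈ (B ^ t).eigenspace μ' := hWμ' (hmap ▸ mem_map_of_mem hxW)
  have hcomm_t := map_pow_apply_of_map_apply hWB (fun y hy => (hcomm y hy).2) t hxW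
  rw [mem_eigenspace_iff.1 (hWμ hxW), map_smul, mem_eigenspace_iff.1 hfx] at hcomm_t
  exact hμ (smul_left_injective K hfx0 hcomm_t)

theorem iSup_span_range_eq_top_of_iSupIndep [FiniteDimensional K V] {ι κ : Type*} [Fintype ι]
    [Fintype κ] {v : ι → κ → V} (hind : iSupIndep fun i => span K (range (v i)))
    (hli : ∀ i, LinearIndependent K (v i))
    (hcard : Fintype.card ι * Fintype.card κ = finrank K V) :
    ⨆ i, span K (range (v i)) = ⊤ := by
  have hsig : LinearIndependent K fun x : Σ _ : ι, κ => v x.1 x.2 :=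
    linearIndependent_iUnion_finite hli fun _ _ _ hi => hind.disjoint_biSup hi
  rw [← span_iUnion, ← Set.range_sigma_eq_iUnion_range fun x : Σ _ : ι, κ => v x.1 x.2]
  exact hsig.span_eq_top_of_card_eq_finrank' (by simpa using hcard)

theorem decomposition_of_cyclic_eigenfamily [FiniteDimensional K V] {ι : Type*} [Fintype ι]
    {t : ℕ} [NeZero t] {A B : End K V} {v : ι → Fin t → V} {α : Fin t → K} {β : ι → K}
    (hα : Injective α) (hβ : Injective β) (hA : ∀ i j, A (v i j) = α j • v i j)
    (hB : ∀ i j, ∃ a : K, a ≠ 0 ∧ B (v i j) = a • v i (j + 1))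
    (hBt : ∀ i j, (B ^ t) (v i j) = β i • v i j) (hv : ∀ i j, v i j ≠ 0)
    (hdim : Fintype.card ι * t = finrank K V)
    (W : ι → Submodule K V) (hW : ∀ i, W i = span K (range (v i))) :
    iSup W = ⊤ ∧ iSupIndep W ∧ (∀ i, LinearIndependent K (v i)) ∧
      (∀ i, ∀ x ∈ W i, A x ∈ W i ∧ B x ∈ W i) ∧
      (∀ i, ∀ U ≤ W i, (∀ x ∈ U, A x ∈ U) → (∀ x ∈ U, B x ∈ U) → U = ⊥ ∨ U = W i) ∧
      (∀ i j, i ≠ j → ¬ ∃ f : V →ₗ[K] V, (W i).map f = W j ∧ (∀ x ∈ W i, f x = 0 → x = 0) ∧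
        (∀ x ∈ W i, f (A x) = A (f x) ∧ f (B x) = B (f x))) := by
  obtain rfl : W = fun i => span K (range (v i)) := funext hW
  have hWβ (i) : span K (range (v i)) ≤ (B ^ t).eigenspace (β i) :=
    span_le.2 (range_subset_iff.2 fun j => mem_eigenspace_iff.2 (hBt i j))
  have hWA (i) : span K (range (v i)) ≤ (span K (range (v i))).comap A :=
    span_range_le_comap fun j => ⟨α j, j, hA i j⟩
  have hWB (i) : span K (range (v i)) ≤ (span K (range (v i))).comap B :=
    span_range_le_comap fun j => (hB i j).imp fun a ha => ⟨j + 1, ha.2⟩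
  have hli (i) : LinearIndependent K (v i) :=
    eigenvectors_linearIndependent' A α hα _ fun j => ⟨mem_eigenspace_iff.2 (hA i j), hv i j⟩
  have hind : iSupIndep fun i => span K (range (v i)) :=
    ((eigenspaces_iSupIndep (B ^ t)).comp hβ).mono hWβ
  refine ⟨iSup_span_range_eq_top_of_iSupIndep hind hli (by simpa using hdim), hind, hli,
    fun i x hx => ⟨hWA i hx, hWB i hx⟩,
    fun i U hU hUA hUB => eq_bot_or_eq_span_of_le_comap hα (hA i) (hB i) hU hUA hUB,
    fun i j hij =>
      not_exists_intertwining_of_le_eigenspace A (hWB i) ?_ (hβ.ne hij) (hWβ i) (hWβ j)⟩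
  exact (Submodule.ne_bot_iff _).2 ⟨v i 0, subset_span (mem_range_self 0), hv i 0⟩

end CyclicEigenfamily

def twistedIndicator {M : Type*} [MonoidWithZero M] (t : ℕ) (c : M) (j q : ℕ) : M :=
  if q % t = j then c ^ (q / t) else 0

section TwistedIndicator

variable {M : Type*} [MonoidWithZero M] {t : ℕ} (c : M)

theorem twistedIndicator_add_self (ht : 0 < t) (j q : ℕ) :
    twistedIndicator t c j (q + t) = c * twistedIndicator t c j q := by
  simp only [twistedIndicator, Nat.add_mod_right, Nat.add_div_right q ht, pow_succ', mul_ite,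
    mul_zero]

theorem twistedIndicator_periodic {r : ℕ} (hc : c ^ r = 1) (j : ℕ) :
    Periodic (twistedIndicator t c j) (t * r) := by
  intro q
  rcases Nat.eq_zero_or_pos t with rfl | ht
  · simp
  simp only [twistedIndicator, Nat.add_mul_mod_self_left, Nat.add_mul_div_left _ _ ht, pow_add, hc,
    mul_one]

theorem twistedIndicator_add_one_add_one {j : ℕ} (hj : j + 1 < t) (q : ℕ) :
    twistedIndicator t c (j + 1) (q + 1) = twistedIndicator t c j q := by
  rcases Nat.add_one_mod_div_cases (by omega : 0 < t) q with ⟨-, hmod, hdiv⟩ | ⟨hlast, hmod, -⟩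
  · simp [twistedIndicator, hmod, hdiv]
  · simp only [twistedIndicator, hmod]
    rw [if_neg (by omega), if_neg (by omega)]

theorem twistedIndicator_zero_add_one (ht : 0 < t) (q : ℕ) :
    twistedIndicator t c 0 (q + 1) = c * twistedIndicator t c (t - 1) q := by
  rcases Nat.add_one_mod_div_cases ht q with ⟨hlt, hmod, -⟩ | ⟨hlast, hmod, hdiv⟩
  · simp only [twistedIndicator, hmod]
    rw [if_neg (by omega), if_neg (by omega), mul_zero]
  · simp [twistedIndicator, hmod, hdiv, show q % t = t - 1 by omega, pow_succ']

end TwistedIndicator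

/-- The paper's `v_{ij}` is `twistedVector n t (η ^ i) j`. -/
def twistedVector {F : Type*} [Field F] (n t : ℕ) (c : F) (j : ℕ) : Fin n → F :=
  fun p => twistedIndicator t c j p

section TwistedVector

open Fin.NatCast

variable {F : Type*} [Field F] {n t r : ℕ} {c : F}

theorem sum_pow_smul_single_eq_twistedVector [NeZero n] (hn : n = t * r) (c : F) (j : Fin t) :
    ∑ ℓ : Fin r, c ^ (ℓ : ℕ) • (Pi.single (⟨((j : ℕ) + ℓ * t) % n, Nat.mod_lt _ (NeZero.pos n)⟩ :
      Fin n) (1 : F) : Fin n → F) = twistedVector n t c j := by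
  funext p
  have ht : 0 < t := j.pos
  have hidx (ℓ : Fin r) : p = (⟨((j : ℕ) + ℓ * t) % n, Nat.mod_lt _ (NeZero.pos n)⟩ : Fin n) ↔
      (p : ℕ) / t = ℓ ∧ (p : ℕ) % t = j := by
    have hlt : (j : ℕ) + ℓ * t < n := by
      rw [hn]; nlinarith [j.isLt, ℓ.isLt]
    rw [Fin.ext_iff]
    dsimp only
    rw [Nat.mod_eq_of_lt hlt, Nat.div_mod_unique ht]
    constructor
    · intro h; exact ⟨by rw [h]; ring, j.isLt⟩
    · rintro ⟨h, -⟩; rw [← h]; ring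
  simp only [Finset.sum_apply, Pi.smul_apply, Pi.single_apply, hidx, smul_eq_mul, mul_ite, mul_one,
    mul_zero, twistedVector, twistedIndicator]
  by_cases hj : (p : ℕ) % t = j
  · have hq : (p : ℕ) / t < r := by
      rw [Nat.div_lt_iff_lt_mul ht, mul_comm, ← hn]; exact p.isLt
    simp only [hj, and_true, if_true]
    rw [Finset.sum_eq_single ⟨(p : ℕ) / t, hq⟩]
    · simp
    · intro ℓ _ hℓ; rw [if_neg]; intro h; exact hℓ (Fin.ext h.symm)
    · simp
  · simp [hj]

theorem twistedVector_ne_zero {j : ℕ} (hjt : j < t) (htn : t ≤ n) : twistedVector n t c j ≠ 0 :=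
  fun h => by
    simpa [twistedVector, twistedIndicator, Nat.mod_eq_of_lt hjt, Nat.div_eq_of_lt hjt] using
      congr_fun h ⟨j, hjt.trans_le htn⟩

theorem diagonal_twistedVector [NeZero n] {A : End F (Fin n → F)} {ζ : F} {m k : ℕ} (hm : 0 < m)
    (hζ : IsPrimitiveRoot ζ m) (hk : orderOf (k : ZMod m) = t)
    (hA : ∀ x p, A x p = ζ ^ k ^ (p : ℕ) * x p) {j : ℕ} (hj : j < t) :
    A (twistedVector n t c j) = ζ ^ k ^ j • twistedVector n t c j := by
  funext p
  rw [hA, Pi.smul_apply, smul_eq_mul]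
  simp only [twistedVector, twistedIndicator]
  split_ifs with hp
  · rw [(hζ.pow_pow_eq_pow_pow_iff hm hk (by omega) p j).2 (by rw [hp, Nat.mod_eq_of_lt hj])]
  · simp

variable [NeZero n] {B : End F (Fin n → F)}

theorem shift_pow_apply (hB : ∀ x p, B x p = x (p - 1)) (d : ℕ) (x : Fin n → F) (p : Fin n) :
    (B ^ d) x p = x (p - d) := by
  induction d generalizing p with
  | zero => simp
  | succ d ih => rw [pow_succ', mul_apply, hB, ih, Nat.cast_succ, sub_sub, add_comm]

theorem shift_twistedVector_of_add_one_lt (hB : ∀ x p, B x p = x (p - 1)) (hn : n = t * r)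
    (hc : c ^ r = 1) {j : ℕ} (hj : j + 1 < t) :
    B (twistedVector n t c j) = twistedVector n t c (j + 1) := by
  have hper := hn ▸ twistedIndicator_periodic c hc (t := t) (j + 1)
  funext p
  rw [hB]
  simp only [twistedVector]
  rw [← hper.apply_val_sub_add p 1, Nat.cast_one, twistedIndicator_add_one_add_one c hj]

theorem shift_twistedVector_last (hB : ∀ x p, B x p = x (p - 1)) (hn : n = t * r)
    (hc : c ^ r = 1) (ht : 0 < t) (hc0 : c ≠ 0) :
    B (twistedVector n t c (t - 1)) = c⁻¹ • twistedVector n t c 0 := by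
  have hper := hn ▸ twistedIndicator_periodic c hc (t := t) 0
  funext p
  rw [hB, Pi.smul_apply, smul_eq_mul]
  simp only [twistedVector]
  rw [← hper.apply_val_sub_add p 1, Nat.cast_one, twistedIndicator_zero_add_one c ht,
    inv_mul_cancel_left₀ hc0]

theorem exists_shift_twistedVector_eq_smul [NeZero t] (hB : ∀ x p, B x p = x (p - 1))
    (hn : n = t * r) (hc : c ^ r = 1) (hc0 : c ≠ 0) (j : Fin t) :
    ∃ a : F, a ≠ 0 ∧ B (twistedVector n t c j) = a • twistedVector n t c (j + 1 : Fin t) := by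
  rw [Fin.val_add_one_eq_mod]
  rcases Nat.lt_or_ge ((j : ℕ) + 1) t with hj | hj
  · refine ⟨1, one_ne_zero, ?_⟩
    rw [Nat.mod_eq_of_lt hj, one_smul, shift_twistedVector_of_add_one_lt hB hn hc hj]
  · refine ⟨c⁻¹, inv_ne_zero hc0, ?_⟩
    rw [show (j : ℕ) + 1 = t by omega, Nat.mod_self, ← shift_twistedVector_last hB hn hc j.pos hc0]
    congr
    omega

theorem shift_pow_twistedVector (hB : ∀ x p, B x p = x (p - 1)) (hn : n = t * r)
    (hc : c ^ r = 1) (ht : 0 < t) (hc0 : c ≠ 0) (j : ℕ) :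
    (B ^ t) (twistedVector n t c j) = c⁻¹ • twistedVector n t c j := by
  have hper := hn ▸ twistedIndicator_periodic c hc (t := t) j
  funext p
  rw [shift_pow_apply hB, Pi.smul_apply, smul_eq_mul]
  simp only [twistedVector]
  rw [← hper.apply_val_sub_add p t, twistedIndicator_add_self c ht, inv_mul_cancel_left₀ hc0]

end TwistedVector

theorem stmt6_general {F : Type*} [Field F] (m n t r k : ℕ)
    [NeZero n] [NeZero t] [NeZero r]
    (hm : 0 < m) (hn : n = t * r)
    (ζ η : F) (hζ : IsPrimitiveRoot ζ m) (hη : IsPrimitiveRoot η r)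
    (hk : orderOf ((k : ZMod m)) = t)
    (A B : (Fin n → F) →ₗ[F] (Fin n → F))
    (hA : ∀ v i, A v i = ζ ^ k ^ (i : ℕ) * v i)
    (hB : ∀ v i, B v i = v (i - 1))
    (v : Fin r → Fin t → (Fin n → F))
    (hv : ∀ i j, v i j = ∑ ℓ : Fin r, η ^ ((i : ℕ) * (ℓ : ℕ)) •
      (Pi.single (⟨((j : ℕ) + (ℓ : ℕ) * t) % n,
        Nat.mod_lt _ (Nat.pos_of_ne_zero (NeZero.ne n))⟩ : Fin n) (1 : F) : Fin n → F))
    (W : Fin r → Submodule F (Fin n → F))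
    (hW : ∀ i, W i = Submodule.span F (Set.range (v i))) :
    (iSup W = ⊤) ∧ (iSupIndep W) ∧
    (∀ i, LinearIndependent F (v i)) ∧
    (∀ i, ∀ x ∈ W i, A x ∈ W i ∧ B x ∈ W i) ∧
    (∀ i j, A (v i j) = ζ ^ k ^ (j : ℕ) • v i j) ∧
    (∀ i, ∀ j : Fin t, ∀ hj : (j : ℕ) + 1 < t, B (v i j) =
      v i ⟨(j : ℕ) + 1, hj⟩) ∧
    (∀ i, B (v i ⟨t - 1, Nat.sub_lt (Nat.pos_of_ne_zero (NeZero.ne t)) one_pos⟩) =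
      (η ^ (i : ℕ))⁻¹ • v i ⟨0, Nat.pos_of_ne_zero (NeZero.ne t)⟩) ∧
    (∀ i, ∀ U ≤ W i, (∀ x ∈ U, A x ∈ U) → (∀ x ∈ U, B x ∈ U) → U = ⊥ ∨ U = W i) ∧
    (∀ i j, i ≠ j → ¬ ∃ f : (Fin n → F) →ₗ[F] (Fin n → F),
      Submodule.map f (W i) = W j ∧ (∀ x ∈ W i, f x = 0 → x = 0) ∧
      (∀ x ∈ W i, f (A x) = A (f x) ∧ f (B x) = B (f x))) := by
  have hc (i : Fin r) : (η ^ (i : ℕ)) ^ r = 1 := by rw [pow_right_comm, hη.pow_eq_one, one_pow]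
  have hc0 (i : Fin r) : η ^ (i : ℕ) ≠ 0 := pow_ne_zero _ (hη.ne_zero (NeZero.ne r))
  have hvec (i : Fin r) (j : Fin t) : v i j = twistedVector n t (η ^ (i : ℕ)) j := by
    rw [hv, ← sum_pow_smul_single_eq_twistedVector hn]
    simp_rw [pow_mul]
  have hAv (i j) : A (v i j) = ζ ^ k ^ (j : ℕ) • v i j := by
    rw [hvec]; exact diagonal_twistedVector hm hζ hk hA j.isLt
  have hBv (i j) : ∃ a : F, a ≠ 0 ∧ B (v i j) = a • v i (j + 1) := by
    simpa only [hvec] using exists_shift_twistedVector_eq_smul hB hn (hc i) (hc0 i) j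
  have hBt (i j) : (B ^ t) (v i j) = (η ^ (i : ℕ))⁻¹ • v i j := by
    rw [hvec]; exact shift_pow_twistedVector hB hn (hc i) (NeZero.pos t) (hc0 i) j
  have hv0 (i j) : v i j ≠ 0 := by
    rw [hvec]; exact twistedVector_ne_zero j.isLt (hn ▸ Nat.le_mul_of_pos_right t (NeZero.pos r))
  have hζinj : Injective fun j : Fin t => ζ ^ k ^ (j : ℕ) := fun j j' h => Fin.ext <| by
    simpa [Nat.mod_eq_of_lt] using (hζ.pow_pow_eq_pow_pow_iff hm hk (NeZero.pos t) j j').1 h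
  have hηinj : Injective fun i : Fin r => (η ^ (i : ℕ))⁻¹ := fun i i' h =>
    Fin.ext (hη.pow_inj i.isLt i'.isLt (inv_injective h))
  obtain ⟨hsup, hind, hli, hinv, hirr, hnoniso⟩ :=
    decomposition_of_cyclic_eigenfamily hζinj hηinj hAv hBv hBt hv0 (by simp [hn, mul_comm]) W hW
  refine ⟨hsup, hind, hli, hinv, hAv, fun i j hj => ?_, fun i => ?_, hirr, hnoniso⟩
  · rw [hvec, hvec]; exact shift_twistedVector_of_add_one_lt hB hn (hc i) hj
  · rw [hvec, hvec]; exact shift_twistedVector_last hB hn (hc i) (NeZero.pos t) (hc0 i)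

/-- Proposition 2.1(2): if the order t of k mod m is a proper divisor of n = t·r,
r is invertible in F and η ∈ F is a primitive r-th root of unity, then the induced
representation (a acting by diag(ζ^{k^i}), b by the cyclic shift on Fin n → F)
decomposes as a direct sum of the r subrepresentations W_i spanned by the vectors
v_{ij} = Σ_ℓ η^{iℓ} e_{j+ℓt}; each W_i is G-invariant and irreducible, on W_i the
generator a acts by diag(ζ,ζ^k,…,ζ^{k^{t-1}}) and b by the cyclic shift with corner
entry η^{-i}, and the W_i are pairwise non-isomorphic as representations. -/
theorem stmt6 {F : Type*} [Field F] [IsAlgClosed F] (m n t r k : ℕ)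
    [NeZero n] [NeZero t] [NeZero r]
    (hm : 0 < m) (hn : n = t * r) (htn : t ≠ n) (hr : (r : F) ≠ 0)
    (ζ η : F) (hζ : IsPrimitiveRoot ζ m) (hη : IsPrimitiveRoot η r)
    (hk : orderOf ((k : ZMod m)) = t)
    (A B : (Fin n → F) →ₗ[F] (Fin n → F))
    (hA : ∀ v i, A v i = ζ ^ k ^ (i : ℕ) * v i)
    (hB : ∀ v i, B v i = v (i - 1))
    (v : Fin r → Fin t → (Fin n → F))
    (hv : ∀ i j, v i j = ∑ ℓ : Fin r, η ^ ((i : ℕ) * (ℓ : ℕ)) •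
      (Pi.single (⟨((j : ℕ) + (ℓ : ℕ) * t) % n,
        Nat.mod_lt _ (Nat.pos_of_ne_zero (NeZero.ne n))⟩ : Fin n) (1 : F) : Fin n → F))
    (W : Fin r → Submodule F (Fin n → F))
    (hW : ∀ i, W i = Submodule.span F (Set.range (v i))) :
    (iSup W = ⊤) ∧ (iSupIndep W) ∧
    (∀ i, LinearIndependent F (v i)) ∧
    (∀ i, ∀ x ∈ W i, A x ∈ W i ∧ B x ∈ W i) ∧
    (∀ i j, A (v i j) = ζ ^ k ^ (j : ℕ) • v i j) ∧
    (∀ i, ∀ j : Fin t, ∀ hj : (j : ℕ) + 1 < t, B (v i j) =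
      v i ⟨(j : ℕ) + 1, hj⟩) ∧
    (∀ i, B (v i ⟨t - 1, Nat.sub_lt (Nat.pos_of_ne_zero (NeZero.ne t)) one_pos⟩) =
      (η ^ (i : ℕ))⁻¹ • v i ⟨0, Nat.pos_of_ne_zero (NeZero.ne t)⟩) ∧
    (∀ i, ∀ U ≤ W i, (∀ x ∈ U, A x ∈ U) → (∀ x ∈ U, B x ∈ U) → U = ⊥ ∨ U = W i) ∧
    (∀ i j, i ≠ j → ¬ ∃ f : (Fin n → F) →ₗ[F] (Fin n → F),
      Submodule.map f (W i) = W j ∧ (∀ x ∈ W i, f x = 0 → x = 0) ∧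
      (∀ x ∈ W i, f (A x) = A (f x) ∧ f (B x) = B (f x))) :=
  stmt6_general m n t r k hm hn ζ η hζ hη hk A B hA hB v hv W hW
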